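/- For positive semidefinite complex matrices A₁, A₂ over the same finite index type, ‖A₁ + A₂‖ ≤ max(‖A₁‖, ‖A₂‖) + ‖√A₁·√A₂‖. -/

import Mathlib

open Matrix ComplexOrder
open scoped InnerProductSpace

/-- The Schatten ∞-norm of a square complex matrix: the operator norm induced by the
Euclidean norm (the largest singular value). -/
noncomputable def opNorm {n : Type*} [Fintype n] [DecidableEq n] (M : Matrix n n ℂ) : ℝ :=
  ‖Matrix.toEuclideanCLM (𝕜 := ℂ) M‖

noncomputable def Matrix.PosSemidef.sqrt {n : Type*} [Fintype n] [DecidableEq n] {𝕜 : Type*}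
    [RCLike 𝕜] {A : Matrix n n 𝕜} (hA : A.PosSemidef) : Matrix n n 𝕜 :=
  hA.1.eigenvectorUnitary.1 * diagonal ((↑) ∘ (·.sqrt) ∘ hA.1.eigenvalues) *
  (star hA.1.eigenvectorUnitary : Matrix n n 𝕜)

lemma psd_sqrt_isHermitian {n : Type*} [Fintype n] [DecidableEq n]
    {A : Matrix n n ℂ} (hA : A.PosSemidef) : hA.sqrt.IsHermitian := by
  unfold Matrix.PosSemidef.sqrt
  simp only [IsHermitian, conjTranspose_mul, diagonal_conjTranspose, Matrix.mul_assoc]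
  congr 2
  · congr 1; ext i; simp
  · simp [Matrix.star_eq_conjTranspose]

lemma psd_sqrt_mul_self {n : Type*} [Fintype n] [DecidableEq n]
    {A : Matrix n n ℂ} (hA : A.PosSemidef) : hA.sqrt * hA.sqrt = A := by
  unfold Matrix.PosSemidef.sqrt
  have hU : (star hA.1.eigenvectorUnitary : Matrix n n ℂ) * hA.1.eigenvectorUnitary.1 = 1 :=
    Unitary.star_mul_self_of_mem hA.1.eigenvectorUnitary.2
  conv_rhs => rw [hA.1.spectral_theorem]
  simp only [Matrix.mul_assoc, ← Matrix.mul_assoc _ hA.1.eigenvectorUnitary.1, hU, Matrix.one_mul]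
  rw [Unitary.conjStarAlgAut_apply]
  simp only [Matrix.mul_assoc]
  rw [← Matrix.mul_assoc (diagonal _) (diagonal _), diagonal_mul_diagonal]
  congr 3
  funext i
  simp only [Function.comp_apply]
  rw [← RCLike.ofReal_mul, Real.mul_self_sqrt (hA.eigenvalues_nonneg i)]

lemma opclm_key {E : Type*} [NormedAddCommGroup E] [InnerProductSpace ℂ E] [CompleteSpace E]
    (S₁ S₂ : E →L[ℂ] E) (h₁ : _root_.IsSelfAdjoint S₁) (h₂ : _root_.IsSelfAdjoint S₂) :
    ‖S₁ * S₁ + S₂ * S₂‖ ≤ max ‖S₁ * S₁‖ ‖S₂ * S₂‖ + ‖S₁ * S₂‖ := by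
  set T := S₁ * S₁ + S₂ * S₂ with hT
  set m := max ‖S₁ * S₁‖ ‖S₂ * S₂‖ with hm
  set c := ‖S₁ * S₂‖ with hc
  have hm0 : (0:ℝ) ≤ m := le_max_of_le_left (norm_nonneg _)
  have hc0 : (0:ℝ) ≤ c := norm_nonneg _
  have hsy₁ : ∀ u v : E, ⟪S₁ u, v⟫_ℂ = ⟪u, S₁ v⟫_ℂ := by
    intro u v
    conv_lhs => rw [← h₁.star_eq, ContinuousLinearMap.star_eq_adjoint]
    exact ContinuousLinearMap.adjoint_inner_left S₁ v u
  have hsy₂ : ∀ u v : E, ⟪S₂ u, v⟫_ℂ = ⟪u, S₂ v⟫_ℂ := by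
    intro u v
    conv_lhs => rw [← h₂.star_eq, ContinuousLinearMap.star_eq_adjoint]
    exact ContinuousLinearMap.adjoint_inner_left S₂ v u
  have hnorm₁ : ‖S₁ * S₁‖ = ‖S₁‖ * ‖S₁‖ := by
    nth_rewrite 1 [← h₁.star_eq]
    exact CStarRing.norm_star_mul_self
  have hnorm₂ : ‖S₂ * S₂‖ = ‖S₂‖ * ‖S₂‖ := by
    nth_rewrite 1 [← h₂.star_eq]
    exact CStarRing.norm_star_mul_self
  have hswap : ‖S₂ * S₁‖ = c := by
    rw [hc, ← norm_star (S₁ * S₂), StarMul.star_mul, h₁.star_eq, h₂.star_eq]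
  have key : ∀ x : E, ‖T x‖ ^ 2 ≤ (m + c) * (‖T‖ * ‖x‖ ^ 2) := by
    intro x
    set a := ‖S₁ x‖ with ha
    set b := ‖S₂ x‖ with hb
    have ha0 : 0 ≤ a := norm_nonneg _
    have hb0 : 0 ≤ b := norm_nonneg _
    have hTx : T x = S₁ (S₁ x) + S₂ (S₂ x) := rfl
    have hq : a ^ 2 + b ^ 2 = RCLike.re (⟪x, T x⟫_ℂ) := by
      have e1 : ⟪x, T x⟫_ℂ = ⟪S₁ x, S₁ x⟫_ℂ + ⟪S₂ x, S₂ x⟫_ℂ := by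
        rw [hTx, inner_add_right, ← hsy₁ x (S₁ x), ← hsy₂ x (S₂ x)]
      rw [e1, map_add, inner_self_eq_norm_sq, inner_self_eq_norm_sq]
    have hq_le : a ^ 2 + b ^ 2 ≤ ‖T‖ * ‖x‖ ^ 2 := by
      rw [hq]
      calc RCLike.re (⟪x, T x⟫_ℂ) ≤ ‖x‖ * ‖T x‖ := re_inner_le_norm x (T x)
        _ ≤ ‖x‖ * (‖T‖ * ‖x‖) := by gcongr; exact T.le_opNorm x
        _ = ‖T‖ * ‖x‖ ^ 2 := by ring
    have hexp : ‖T x‖ ^ 2 = ‖S₁ (S₁ x)‖ ^ 2 +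
        2 * RCLike.re (⟪S₁ (S₁ x), S₂ (S₂ x)⟫_ℂ) + ‖S₂ (S₂ x)‖ ^ 2 := by
      rw [hTx]; exact norm_add_sq (𝕜 := ℂ) _ _
    have h1 : ‖S₁ (S₁ x)‖ ^ 2 ≤ m * a ^ 2 := by
      have h0 := S₁.le_opNorm (S₁ x)
      have h' : ‖S₁ (S₁ x)‖ ^ 2 ≤ (‖S₁‖ * ‖S₁‖) * a ^ 2 := by
        nlinarith [norm_nonneg (S₁ (S₁ x))]
      calc ‖S₁ (S₁ x)‖ ^ 2 ≤ ‖S₁ * S₁‖ * a ^ 2 := by rw [hnorm₁]; exact h'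
        _ ≤ m * a ^ 2 := by gcongr; exact le_max_left _ _
    have h2 : ‖S₂ (S₂ x)‖ ^ 2 ≤ m * b ^ 2 := by
      have h0 := S₂.le_opNorm (S₂ x)
      have h' : ‖S₂ (S₂ x)‖ ^ 2 ≤ (‖S₂‖ * ‖S₂‖) * b ^ 2 := by
        nlinarith [norm_nonneg (S₂ (S₂ x))]
      calc ‖S₂ (S₂ x)‖ ^ 2 ≤ ‖S₂ * S₂‖ * b ^ 2 := by rw [hnorm₂]; exact h'
        _ ≤ m * b ^ 2 := by gcongr; exact le_max_right _ _
    have hcross : RCLike.re (⟪S₁ (S₁ x), S₂ (S₂ x)⟫_ℂ) ≤ c * a * b := by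
      have e2 : ⟪S₁ (S₁ x), S₂ (S₂ x)⟫_ℂ = ⟪S₂ (S₁ (S₁ x)), S₂ x⟫_ℂ :=
        (hsy₂ (S₁ (S₁ x)) (S₂ x)).symm
      rw [e2]
      calc RCLike.re (⟪S₂ (S₁ (S₁ x)), S₂ x⟫_ℂ) ≤ ‖S₂ (S₁ (S₁ x))‖ * ‖S₂ x‖ :=
            re_inner_le_norm _ _
        _ = ‖(S₂ * S₁) (S₁ x)‖ * b := rfl
        _ ≤ (‖S₂ * S₁‖ * a) * b := by gcongr; exact (S₂ * S₁).le_opNorm (S₁ x)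
        _ = c * a * b := by rw [hswap]
    have hab2 : 2 * (c * a * b) ≤ c * (a ^ 2 + b ^ 2) := by nlinarith [sq_nonneg (a - b)]
    calc ‖T x‖ ^ 2 = ‖S₁ (S₁ x)‖ ^ 2 +
          2 * RCLike.re (⟪S₁ (S₁ x), S₂ (S₂ x)⟫_ℂ) + ‖S₂ (S₂ x)‖ ^ 2 := hexp
      _ ≤ m * a ^ 2 + 2 * (c * a * b) + m * b ^ 2 := by linarith
      _ ≤ m * (a ^ 2 + b ^ 2) + c * (a ^ 2 + b ^ 2) := by linarith
      _ = (m + c) * (a ^ 2 + b ^ 2) := by ring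
      _ ≤ (m + c) * (‖T‖ * ‖x‖ ^ 2) :=
          mul_le_mul_of_nonneg_left hq_le (by linarith)
  by_cases hT0 : ‖T‖ = 0
  · rw [hT0]; positivity
  · have hTpos : 0 < ‖T‖ := lt_of_le_of_ne (norm_nonneg _) (Ne.symm hT0)
    have hbound : ‖T‖ ≤ Real.sqrt ((m + c) * ‖T‖) := by
      apply ContinuousLinearMap.opNorm_le_bound _ (Real.sqrt_nonneg _)
      intro x
      have hx := key x
      have hs0 : (0:ℝ) ≤ (m + c) * ‖T‖ := by positivity
      calc ‖T x‖ = Real.sqrt (‖T x‖ ^ 2) := (Real.sqrt_sq (norm_nonneg _)).symm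
        _ ≤ Real.sqrt ((m + c) * ‖T‖ * ‖x‖ ^ 2) := Real.sqrt_le_sqrt (by linarith)
        _ = Real.sqrt ((m + c) * ‖T‖) * ‖x‖ := by
            rw [Real.sqrt_mul hs0, Real.sqrt_sq (norm_nonneg _)]
    have hsq : ‖T‖ ^ 2 ≤ (m + c) * ‖T‖ := (Real.le_sqrt (norm_nonneg T) (by positivity)).mp hbound
    nlinarith [hTpos, hsq]

theorem stmt3 {ι : Type*} [Fintype ι] [DecidableEq ι] (A₁ A₂ : Matrix ι ι ℂ)
    (hA₁ : A₁.PosSemidef) (hA₂ : A₂.PosSemidef) :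
    opNorm (A₁ + A₂) ≤ max (opNorm A₁) (opNorm A₂) + opNorm (hA₁.sqrt * hA₂.sqrt) := by
  have h1 : _root_.IsSelfAdjoint (toEuclideanCLM (𝕜 := ℂ) hA₁.sqrt) := by
    rw [isSelfAdjoint_iff, ← map_star]
    congr 1
    rw [Matrix.star_eq_conjTranspose]
    exact psd_sqrt_isHermitian hA₁
  have h2 : _root_.IsSelfAdjoint (toEuclideanCLM (𝕜 := ℂ) hA₂.sqrt) := by
    rw [isSelfAdjoint_iff, ← map_star]
    congr 1
    rw [Matrix.star_eq_conjTranspose]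
    exact psd_sqrt_isHermitian hA₂
  have h := opclm_key (toEuclideanCLM (𝕜 := ℂ) hA₁.sqrt) (toEuclideanCLM (𝕜 := ℂ) hA₂.sqrt) h1 h2
  simpa only [opNorm, ← _root_.map_mul, ← _root_.map_add, psd_sqrt_mul_self hA₁, psd_sqrt_mul_self hA₂] using h
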